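/- arXiv:2403.07878 — 2 statements merged into one kernel-verified Lean document; each statement's English description precedes it below -/
import Mathlib

section
/- For any even integer s, any integer t, and non-negative integer n: sum_{k=0}^n binom(n,k) * (-1)^k * L_s^(n-k) * F_{2s(k+2)+s(n-k)+t} / (k+2) = (L_s^(n+2) * F_{s(n+2)+t} - F_t) / ((n+1)(n+2)) - F_{2s+t} / (n+1). -/
/-!
Put `L = L_s` and `a m = F_{s m + t}`. Since `φ ψ = -1` and `s` is even, `φ^s ψ^s = 1`, so Binet's
formulas give `a (m + 2) = L a (m + 1) - a m`. For the shift `E` on sequences this says that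
`(L - E) E` fixes `a`, hence so does `(L - E)^m E^m`; expanding by the binomial theorem,
`∑_j C(m,j) (-1)^j L^(m-j) a (x + m + j) = a x`, and the absorption identity
`j C(m,j) = m C(m-1,j-1)` turns this into `∑_j j C(m,j) (-1)^j L^(m-j) a (x + m + j) = -m a (x + 2)`.
Finally `C(n,k) / (k+2) = (k+1) C(n+2,k+2) / ((n+1)(n+2))`, so the left-hand side is
`∑_{j ≥ 2} (j-1) C(n+2,j) (-1)^j L^(n+2-j) a (n+2+j) / ((n+1)(n+2))`, which the two identities
with `m = n + 2` evaluate.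
-/

open Finset

/-- Lucas numbers on naturals. -/
def lucasNat : ℕ → ℤ
  | 0 => 2
  | 1 => 1
  | n + 2 => lucasNat (n + 1) + lucasNat n

/-- Fibonacci numbers extended to integer indices: `F_{-m} = (-1)^(m-1) F_m`. -/
def fibZ (n : ℤ) : ℤ :=
  if 0 ≤ n then (Nat.fib n.toNat : ℤ) else (-1) ^ ((-n).toNat + 1) * (Nat.fib (-n).toNat : ℤ)

/-- Lucas numbers extended to integer indices: `L_{-m} = (-1)^m L_m`. -/
def lucasZ (n : ℤ) : ℤ :=
  if 0 ≤ n then lucasNat n.toNat else (-1) ^ (-n).toNat * lucasNat (-n).toNat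

open Real goldenRatio

theorem fibZ_eq_intFib : fibZ = Int.fib := by
  funext n
  obtain ⟨n, rfl | rfl⟩ := n.eq_nat_or_neg
  · simp [fibZ]
  · rw [Int.fib_neg_natCast]
    rcases n with _ | n
    · simp [fibZ]
    · rw [fibZ, if_neg (by omega)]
      simp

theorem lucasNat_eq_goldenRatio_pow_add (n : ℕ) : (lucasNat n : ℝ) = φ ^ n + ψ ^ n := by
  induction n using Nat.twoStepInduction with
  | zero => norm_num [lucasNat]
  | one => simp [lucasNat, goldenRatio_add_goldenConj]
  | more n ih₀ ih₁ =>
    rw [lucasNat, Int.cast_add, ih₀, ih₁]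
    -- `φ` and `ψ` are abbreviations, which `ring` would unfold into expressions in `√5`.
    have hφ := goldenRatio_sq
    have hψ := goldenConj_sq
    generalize φ = x at *
    generalize ψ = y at *
    linear_combination -(x ^ n * hφ + y ^ n * hψ)

theorem lucasZ_eq_goldenRatio_zpow_add (n : ℤ) : (lucasZ n : ℝ) = φ ^ n + ψ ^ n := by
  obtain ⟨n, rfl | rfl⟩ := n.eq_nat_or_neg
  · simp [lucasZ, lucasNat_eq_goldenRatio_pow_add]
  · rcases n with _ | n
    · norm_num [lucasZ, lucasNat]
    · rw [lucasZ, if_neg (by omega)]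
      simp only [neg_neg, Int.toNat_natCast, Int.cast_mul, Int.cast_pow, Int.cast_neg, Int.cast_one,
        lucasNat_eq_goldenRatio_pow_add, zpow_neg, zpow_natCast, ← inv_pow, inv_goldenRatio,
        inv_goldenConj]
      generalize φ = x
      generalize ψ = y
      ring

theorem fibZ_add_two_mul (x s : ℤ) :
    fibZ (x + 2 * s) = lucasZ s * fibZ (x + s) - s.negOnePow * fibZ x := by
  apply Int.cast_injective (α := ℝ)
  have hφ := goldenRatio_ne_zero
  have hψ := goldenConj_ne_zero
  have hφψ : φ ^ s * ψ ^ s = (-1) ^ s := by rw [← mul_zpow, goldenRatio_mul_goldenConj]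
  push_cast
  rw [Int.cast_negOnePow, fibZ_eq_intFib]
  simp only [coe_intFib_eq, lucasZ_eq_goldenRatio_zpow_add, zpow_add₀ hφ, zpow_add₀ hψ, two_mul]
  linear_combination (ψ ^ x - φ ^ x) / √5 * hφψ

theorem fibZ_mul_add_two {s : ℤ} (hs : Even s) (t y : ℤ) :
    fibZ (s * (y + 2) + t) = lucasZ s * fibZ (s * (y + 1) + t) - fibZ (s * y + t) := by
  have h := fibZ_add_two_mul (s * y + t) s
  rw [Int.negOnePow_even s hs, Units.val_one, one_mul] at h
  rw [show s * (y + 2) + t = s * y + t + 2 * s by ring, show s * (y + 1) + t = s * y + t + s by ring,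
    h]

section ShiftOperator

variable {R : Type*} [CommRing R]

variable (R) in
def seqShift : Module.End R (ℕ → R) := LinearMap.funLeft R R (· + 1)

theorem seqShift_pow_apply (j : ℕ) (a : ℕ → R) (x : ℕ) : (seqShift R ^ j) a x = a (x + j) := by
  induction j generalizing x with
  | zero => rfl
  | succ j ih =>
    rw [pow_succ', Module.End.mul_apply]
    exact (ih (x + 1)).trans (by rw [add_right_comm, add_assoc])

theorem algebraMap_sub_seqShift_pow_apply (L : R) (m : ℕ) (b : ℕ → R) (x : ℕ) :
    ((algebraMap R _ L - seqShift R) ^ m) b x =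
      ∑ j ∈ range (m + 1), (m.choose j : R) * (-1) ^ j * L ^ (m - j) * b (x + j) := by
  have hneg : -seqShift R = algebraMap R _ (-1) * seqShift R := by
    rw [map_neg, map_one]; exact (neg_one_mul (seqShift R)).symm
  rw [sub_eq_neg_add, (Algebra.commute_algebraMap_right L (-seqShift R)).add_pow,
    LinearMap.sum_apply, Finset.sum_apply]
  refine Finset.sum_congr rfl fun j _ => ?_
  rw [hneg, (Algebra.commute_algebraMap_left _ _).mul_pow]
  simp only [← map_pow, Module.End.mul_apply, Module.algebraMap_end_apply,
    Module.End.natCast_apply, Pi.smul_apply, nsmul_eq_mul, smul_eq_mul, Pi.mul_apply,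
    Pi.natCast_apply, seqShift_pow_apply]
  ring

variable {L : R} {a : ℕ → R}

theorem algebraMap_sub_seqShift_pow_mul_seqShift_pow_apply
    (ha : ∀ y, a (y + 2) = L * a (y + 1) - a y) (m : ℕ) :
    ((algebraMap R _ L - seqShift R) ^ m * seqShift R ^ m) a = a := by
  have hfix : ((algebraMap R _ L - seqShift R) * seqShift R) a = a := by
    funext y
    change L * a (y + 1) - a (y + 2) = a y
    rw [ha]
    ring
  rw [← (Algebra.commute_algebraMap_left L _ |>.sub_left (Commute.refl _)).mul_pow,
    Module.End.pow_apply]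
  exact Function.IsFixedPt.iterate hfix m

theorem sum_choose_mul_shift_eq (ha : ∀ y, a (y + 2) = L * a (y + 1) - a y) (m x : ℕ) :
    ∑ j ∈ range (m + 1), (m.choose j : R) * (-1) ^ j * L ^ (m - j) * a (x + m + j) = a x := by
  have h := congrFun (algebraMap_sub_seqShift_pow_mul_seqShift_pow_apply ha m) x
  rw [Module.End.mul_apply, algebraMap_sub_seqShift_pow_apply] at h
  simpa only [seqShift_pow_apply, add_right_comm _ _ m] using h

theorem sum_mul_choose_mul_shift_eq (ha : ∀ y, a (y + 2) = L * a (y + 1) - a y) (m x : ℕ) :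
    ∑ j ∈ range (m + 1), (j : R) * m.choose j * (-1) ^ j * L ^ (m - j) * a (x + m + j) =
      -m * a (x + 2) := by
  cases m with
  | zero => simp
  | succ m =>
    rw [sum_range_succ', ← sum_choose_mul_shift_eq ha m (x + 2), mul_sum]
    simp only [Nat.cast_zero, zero_mul, add_zero]
    refine sum_congr rfl fun i _ => ?_
    have habs : ((i + 1 : ℕ) : R) * (m + 1).choose (i + 1) = (m + 1 : ℕ) * m.choose i := by
      rw [mul_comm, ← Nat.cast_mul, ← Nat.cast_mul, Nat.add_one_mul_choose_eq]
    rw [habs, Nat.add_sub_add_right, pow_succ,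
      show x + (m + 1) + (i + 1) = x + 2 + m + i by ring]
    ring

end ShiftOperator

theorem Nat.choose_add_two_mul (n k : ℕ) :
    (n + 2).choose (k + 2) * ((k + 2) * (k + 1)) = (n + 1) * (n + 2) * n.choose k := by
  calc (n + 2).choose (k + 2) * ((k + 2) * (k + 1))
      = (n + 2) * (n + 1).choose (k + 1) * (k + 1) := by
        rw [Nat.add_one_mul_choose_eq (n + 1) (k + 1), mul_assoc]
    _ = (n + 1) * (n + 2) * n.choose k := by
        rw [mul_assoc, ← Nat.add_one_mul_choose_eq]; ring

theorem sum_choose_mul_shift_div_add_two {K : Type*} [Field K] [CharZero K] {L : K} {a : ℕ → K}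
    (ha : ∀ y, a (y + 2) = L * a (y + 1) - a y) (n : ℕ) :
    ∑ k ∈ range (n + 1), (n.choose k : K) * (-1) ^ k * L ^ (n - k) * a (n + k + 4) / (k + 2) =
      (L ^ (n + 2) * a (n + 2) - a 0) / ((n + 1) * (n + 2)) - a 2 / (n + 1) := by
  have hn₁ : (n + 1 : K) ≠ 0 := by exact_mod_cast n.succ_ne_zero
  have hn₂ : (n + 2 : K) ≠ 0 := by exact_mod_cast (n + 1).succ_ne_zero
  let f : ℕ → K := fun j =>
    ((j : K) - 1) * (n + 2).choose j * (-1) ^ j * L ^ (n + 2 - j) * a (0 + (n + 2) + j)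
  have hsum : ∑ j ∈ range (n + 2 + 1), f j = -(n + 2 : ℕ) * a 2 - a 0 := by
    simp only [f, sub_mul, one_mul, sum_sub_distrib]
    rw [sum_mul_choose_mul_shift_eq ha, sum_choose_mul_shift_eq ha]
  rw [sum_range_succ', sum_range_succ'] at hsum
  have hf₁ : f (0 + 1) = 0 := by simp [f]
  have hf₀ : f 0 = -(L ^ (n + 2) * a (n + 2)) := by simp [f]
  have hweight : ∀ k ∈ range (n + 1),
      (n.choose k : K) * (-1) ^ k * L ^ (n - k) * a (n + k + 4) / (k + 2) =
        f (k + 1 + 1) / ((n + 1) * (n + 2)) := by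
    intro k _
    have hchoose : ((n + 2).choose (k + 2) : K) * ((k + 2) * (k + 1)) =
        (n + 1) * (n + 2) * n.choose k := by
      exact_mod_cast Nat.choose_add_two_mul n k
    simp only [f]
    rw [show k + 1 + 1 = k + 2 from rfl, show n + 2 - (k + 2) = n - k by omega,
      show 0 + (n + 2) + (k + 2) = n + k + 4 by omega,
      div_eq_div_iff (by exact_mod_cast (k + 1).succ_ne_zero) (mul_ne_zero hn₁ hn₂)]
    push_cast
    linear_combination -((-1) ^ k * L ^ (n - k) * a (n + k + 4) * hchoose)
  rw [sum_congr rfl hweight, ← sum_div]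
  rw [hf₁, hf₀] at hsum
  field_simp
  push_cast at hsum
  linear_combination hsum

theorem stmt_16 (s t : ℤ) (hs : Even s) (n : ℕ) :
    ∑ k ∈ range (n + 1),
      (n.choose k : ℚ) * (-1) ^ k * (lucasZ s : ℚ) ^ (n - k) *
        (fibZ (2 * s * (k + 2) + s * ((n : ℤ) - k) + t) : ℚ) / (k + 2) =
    ((lucasZ s : ℚ) ^ (n + 2) * (fibZ (s * (n + 2) + t) : ℚ) - fibZ t) / ((n + 1) * (n + 2)) -
    (fibZ (2 * s + t) : ℚ) / (n + 1) := by
  have ha (y : ℕ) : (fibZ (s * ↑(y + 2) + t) : ℚ) =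
      lucasZ s * fibZ (s * ↑(y + 1) + t) - fibZ (s * y + t) := by
    push_cast
    exact_mod_cast fibZ_mul_add_two hs t y
  convert sum_choose_mul_shift_div_add_two (a := fun m : ℕ ↦ (fibZ (s * m + t) : ℚ)) ha n
    using 6 <;> push_cast <;> ring
end

section
/- For any non-negative integer n: sum_{k=0}^n binom(n,k) * (-1)^(k+1) * F_{n-2k} / (k+2) = sum_{k=0}^n binom(n,k) * (-1)^k * F_k / ((k+1)(k+2)) = (1 - F_{n+4}) / ((n+1)(n+2)) + 1/(n+1). -/
open Finset

/-! Both sides become alternating binomial sums of Fibonacci numbers once the weights are absorbed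
into binomial coefficients: `C(n,k)/((k+1)(k+2)) = C(n+2,k+2)/((n+1)(n+2))` and
`1/(k+2) = 1/(k+1) - 1/((k+1)(k+2))`. A completed alternating binomial sum is an iterated forward
difference, and for any `f` with `f (n+2) = f (n+1) + f n` the differences are again shifts of `f`:
`Δ_1 f n = f (n-1)` and `Δ_{-2} f n = -f (n-1)`. So the completed sums are single Fibonacci
numbers, and the truncated sums differ from them by one or two explicit boundary terms. -/

open fwdDiff

section FibonacciType

variable {G : Type*} [AddCommGroup G]

lemma sum_neg_one_pow_mul_choose_smul_shift {M : Type*} [AddCommMonoid M] (h : M) (f : M → G)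
    (m : ℕ) (y : M) :
    ∑ k ∈ range (m + 1), ((-1 : ℤ) ^ k * m.choose k) • f (y + k • h) =
      (-1 : ℤ) ^ m • (Δ_[h])^[m] f y := by
  rw [fwdDiff_iter_eq_sum_shift, smul_sum]
  refine sum_congr rfl fun k hk ↦ ?_
  obtain ⟨d, rfl⟩ := Nat.exists_eq_add_of_le (mem_range_succ_iff.mp hk)
  have hsign : (-1 : ℤ) ^ (k + d) * (-1) ^ d = (-1) ^ k := by
    rw [pow_add, mul_assoc, ← mul_pow, neg_one_mul, neg_neg, one_pow, mul_one]
  rw [smul_smul, ← mul_assoc, Nat.add_sub_cancel_left, hsign]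

def IsFibonacciType (f : ℤ → G) : Prop := ∀ n, f (n + 2) = f (n + 1) + f n

namespace IsFibonacciType

variable {f : ℤ → G}

lemma comp_sub (hf : IsFibonacciType f) (c : ℤ) : IsFibonacciType fun n ↦ f (n - c) := by
  intro n
  simpa only [sub_add_eq_add_sub] using hf (n - c)

lemma neg (hf : IsFibonacciType f) : IsFibonacciType (-f) := by
  intro n
  simp only [Pi.neg_apply, hf n, neg_add]

lemma fwdDiff_one (hf : IsFibonacciType f) : Δ_[1] f = fun n ↦ f (n - 1) := by
  funext n
  have h := hf (n - 1)
  rw [show n - 1 + 2 = n + 1 by ring, sub_add_cancel] at h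
  simp only [fwdDiff, h, add_sub_cancel_left]

lemma fwdDiff_neg_two (hf : IsFibonacciType f) : Δ_[-2] f = fun n ↦ -f (n - 1) := by
  funext n
  have h := hf (n - 2)
  rw [show n - 2 + 2 = n by ring, show n - 2 + 1 = n - 1 by ring] at h
  simp only [fwdDiff, h, ← sub_eq_add_neg]
  abel

lemma fwdDiff_one_iterate (hf : IsFibonacciType f) (m : ℕ) (y : ℤ) :
    (Δ_[1])^[m] f y = f (y - m) := by
  induction m generalizing f with
  | zero => simp
  | succ m ih =>
    rw [Function.iterate_succ_apply, hf.fwdDiff_one, ih (hf.comp_sub 1)]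
    push_cast
    ring_nf

lemma fwdDiff_neg_two_iterate (hf : IsFibonacciType f) (m : ℕ) (y : ℤ) :
    (Δ_[-2])^[m] f y = (-1 : ℤ) ^ m • f (y - m) := by
  induction m generalizing f with
  | zero => simp
  | succ m ih =>
    rw [Function.iterate_succ_apply, hf.fwdDiff_neg_two, ← Pi.neg_def, ih (hf.comp_sub 1).neg,
      Pi.neg_apply, pow_succ, mul_neg_one, neg_smul, smul_neg, Nat.cast_succ, sub_add_eq_sub_sub]

lemma sum_choose_smul_sub_two_mul (hf : IsFibonacciType f) (m : ℕ) (y : ℤ) :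
    ∑ k ∈ range (m + 1), ((-1 : ℤ) ^ k * m.choose k) • f (y - 2 * k) = f (y - m) := by
  have h := sum_neg_one_pow_mul_choose_smul_shift (-2) f m y
  rw [hf.fwdDiff_neg_two_iterate, smul_smul, ← mul_pow, neg_one_mul, neg_neg, one_pow,
    one_smul] at h
  simpa [sub_eq_add_neg, mul_comm] using h

lemma sum_choose_smul_add (hf : IsFibonacciType f) (m : ℕ) (y : ℤ) :
    ∑ k ∈ range (m + 1), ((-1 : ℤ) ^ k * m.choose k) • f (y + k) = (-1 : ℤ) ^ m • f (y - m) := by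
  simpa [hf.fwdDiff_one_iterate] using sum_neg_one_pow_mul_choose_smul_shift 1 f m y

end IsFibonacciType

end FibonacciType

lemma fibZ_natCast (m : ℕ) : fibZ m = Nat.fib m := by simp [fibZ]

lemma fibZ_neg_natCast (m : ℕ) : fibZ (-m) = (-1) ^ (m + 1) * Nat.fib m := by
  rcases m with _ | m
  · simp [fibZ]
  · rw [fibZ, if_neg (by omega)]
    simp

lemma isFibonacciType_fibZ : IsFibonacciType fibZ := by
  intro n
  obtain ⟨m, rfl | rfl⟩ := Int.eq_nat_or_neg n
  · have h2 := fibZ_natCast (m + 2)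
    have h1 := fibZ_natCast (m + 1)
    push_cast at h1 h2
    rw [h2, h1, fibZ_natCast, Nat.fib_add_two, Nat.cast_add, add_comm]
  · match m with
    | 0 => simp [fibZ]
    | 1 => simp [fibZ]
    | m + 2 =>
      rw [show -((m + 2 : ℕ) : ℤ) + 2 = -(m : ℤ) by push_cast; ring,
        show -((m + 2 : ℕ) : ℤ) + 1 = -(m + 1 : ℕ) by push_cast; ring,
        fibZ_neg_natCast, fibZ_neg_natCast, fibZ_neg_natCast, Nat.fib_add_two (n := m)]
      push_cast
      ring

lemma sum_choose_add_one_mul_fibZ_sub_two_mul (n : ℕ) :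
    ∑ k ∈ range (n + 1), (-1) ^ k * ((n + 1).choose (k + 1) : ℤ) * fibZ (n - 2 * k) =
      Nat.fib (n + 2) - 1 := by
  have h := isFibonacciType_fibZ.sum_choose_smul_sub_two_mul (n + 1) (n + 2)
  rw [sum_range_succ'] at h
  have hterm : ∀ k ∈ range (n + 1), ((-1 : ℤ) ^ (k + 1) * ((n + 1).choose (k + 1) : ℕ)) •
      fibZ (n + 2 - 2 * (k + 1 : ℕ)) =
        -((-1) ^ k * ((n + 1).choose (k + 1) : ℤ) * fibZ (n - 2 * k)) := by
    intro k _
    push_cast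
    ring_nf
  have hfirst : ((-1 : ℤ) ^ 0 * ((n + 1).choose 0 : ℕ)) • fibZ (n + 2 - 2 * (0 : ℕ)) =
      Nat.fib (n + 2) := by
    simpa using fibZ_natCast (n + 2)
  have hvalue : fibZ (n + 2 - (n + 1 : ℕ)) = 1 := by
    rw [show (n : ℤ) + 2 - (n + 1 : ℕ) = 1 by push_cast; ring]
    rfl
  rw [sum_congr rfl hterm, sum_neg_distrib, hfirst, hvalue] at h
  linarith

lemma sum_choose_add_two_mul_fibZ_sub_two_mul (n : ℕ) :
    ∑ k ∈ range (n + 1), (-1) ^ k * ((n + 2).choose (k + 2) : ℤ) * fibZ (n - 2 * k) =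
      1 - Nat.fib (n + 4) + (n + 2) * Nat.fib (n + 2) := by
  have h := isFibonacciType_fibZ.sum_choose_smul_sub_two_mul (n + 2) (n + 4)
  rw [sum_range_succ', sum_range_succ'] at h
  have hterm : ∀ k ∈ range (n + 1), ((-1 : ℤ) ^ (k + 1 + 1) * ((n + 2).choose (k + 1 + 1) : ℕ)) •
      fibZ (n + 4 - 2 * (k + 1 + 1 : ℕ)) =
        (-1) ^ k * ((n + 2).choose (k + 2) : ℤ) * fibZ (n - 2 * k) := by
    intro k _
    push_cast
    ring_nf
  have hsecond : ((-1 : ℤ) ^ (0 + 1) * ((n + 2).choose (0 + 1) : ℕ)) •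
      fibZ (n + 4 - 2 * (0 + 1 : ℕ)) = -((n + 2) * Nat.fib (n + 2)) := by
    rw [show (n : ℤ) + 4 - 2 * (0 + 1 : ℕ) = (n + 2 : ℕ) by push_cast; ring, fibZ_natCast,
      zero_add, pow_one, Nat.choose_one_right, smul_eq_mul]
    push_cast
    ring
  have hfirst : ((-1 : ℤ) ^ 0 * ((n + 2).choose 0 : ℕ)) • fibZ (n + 4 - 2 * (0 : ℕ)) =
      Nat.fib (n + 4) := by
    simpa using fibZ_natCast (n + 4)
  have hvalue : fibZ (n + 4 - (n + 2 : ℕ)) = 1 := by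
    rw [show (n : ℤ) + 4 - (n + 2 : ℕ) = 2 by push_cast; ring]
    rfl
  rw [sum_congr rfl hterm, hsecond, hfirst, hvalue] at h
  linarith

lemma sum_choose_add_two_mul_fib (n : ℕ) :
    ∑ k ∈ range (n + 1), (-1) ^ k * ((n + 2).choose (k + 2) : ℤ) * Nat.fib k =
      n + 3 - Nat.fib (n + 4) := by
  have h := isFibonacciType_fibZ.sum_choose_smul_add (n + 2) (-2)
  rw [sum_range_succ', sum_range_succ'] at h
  have hterm : ∀ k ∈ range (n + 1), ((-1 : ℤ) ^ (k + 1 + 1) * ((n + 2).choose (k + 1 + 1) : ℕ)) •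
      fibZ (-2 + (k + 1 + 1 : ℕ)) = (-1) ^ k * ((n + 2).choose (k + 2) : ℤ) * Nat.fib k := by
    intro k _
    rw [show -2 + ((k + 1 + 1 : ℕ) : ℤ) = k by push_cast; ring, fibZ_natCast]
    ring_nf
  have hsecond : ((-1 : ℤ) ^ (0 + 1) * ((n + 2).choose (0 + 1) : ℕ)) •
      fibZ (-2 + (0 + 1 : ℕ)) = -(n + 2) := by
    rw [show -2 + ((0 + 1 : ℕ) : ℤ) = -1 by norm_num, show fibZ (-1) = 1 from rfl]
    simp
  have hfirst : ((-1 : ℤ) ^ 0 * ((n + 2).choose 0 : ℕ)) • fibZ (-2 + (0 : ℕ)) = -1 := by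
    rw [Nat.cast_zero, add_zero, show fibZ (-2) = -1 from rfl]
    simp
  have hvalue : (-1 : ℤ) ^ (n + 2) • fibZ (-2 - (n + 2 : ℕ)) = -Nat.fib (n + 4) := by
    rw [show -2 - ((n + 2 : ℕ) : ℤ) = -(n + 4 : ℕ) by push_cast; ring, fibZ_neg_natCast,
      smul_eq_mul, ← mul_assoc, ← pow_add, Odd.neg_one_pow ⟨n + 3, by ring⟩, neg_one_mul]
  rw [sum_congr rfl hterm, hsecond, hfirst, hvalue] at h
  linarith

section ChooseDiv

variable {K : Type*} [Field K] [CharZero K]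

lemma cast_choose_div_add_one (n k : ℕ) :
    (n.choose k : K) / (k + 1) = (n + 1).choose (k + 1) / (n + 1) := by
  rw [div_eq_div_iff (Nat.cast_add_one_ne_zero k) (Nat.cast_add_one_ne_zero n)]
  exact_mod_cast (mul_comm _ _).trans (Nat.add_one_mul_choose_eq n k)

lemma cast_choose_div_add_one_mul_add_two (n k : ℕ) :
    (n.choose k : K) / ((k + 1) * (k + 2)) = (n + 2).choose (k + 2) / ((n + 1) * (n + 2)) := by
  calc (n.choose k : K) / ((k + 1) * (k + 2))
      = (n + 1).choose (k + 1) / ((k + 1 : ℕ) + 1) / (n + 1) := by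
        rw [← div_div, cast_choose_div_add_one, div_right_comm]
        push_cast
        ring
    _ = (n + 2).choose (k + 2) / ((n + 1) * (n + 2)) := by
        rw [cast_choose_div_add_one, div_div]
        push_cast
        ring

lemma cast_choose_div_add_two (n k : ℕ) :
    (n.choose k : K) / (k + 2) =
      (n + 1).choose (k + 1) / (n + 1) - (n + 2).choose (k + 2) / ((n + 1) * (n + 2)) := by
  have hk1 : (k : K) + 1 ≠ 0 := Nat.cast_add_one_ne_zero k
  have hk2 : (k : K) + 2 ≠ 0 := by exact_mod_cast Nat.succ_ne_zero (k + 1)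
  rw [← cast_choose_div_add_one, ← cast_choose_div_add_one_mul_add_two]
  field_simp
  ring

end ChooseDiv

lemma sum_choose_mul_fibZ_sub_two_mul_div_add_two (n : ℕ) :
    ∑ k ∈ range (n + 1),
      (n.choose k : ℚ) * (-1) ^ (k + 1) * (fibZ ((n : ℤ) - 2 * k) : ℚ) / (k + 2) =
        (1 - Nat.fib (n + 4) + (n + 2) * Nat.fib (n + 2)) / ((n + 1) * (n + 2)) -
          (Nat.fib (n + 2) - 1) / (n + 1) := by
  have h1 : ∑ k ∈ range (n + 1), (-1) ^ k * ((n + 1).choose (k + 1) : ℚ) * fibZ (n - 2 * k) =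
      Nat.fib (n + 2) - 1 := by
    exact_mod_cast sum_choose_add_one_mul_fibZ_sub_two_mul n
  have h2 : ∑ k ∈ range (n + 1), (-1) ^ k * ((n + 2).choose (k + 2) : ℚ) * fibZ (n - 2 * k) =
      1 - Nat.fib (n + 4) + (n + 2) * Nat.fib (n + 2) := by
    exact_mod_cast sum_choose_add_two_mul_fibZ_sub_two_mul n
  rw [← h1, ← h2, sum_div, sum_div, ← sum_sub_distrib]
  refine sum_congr rfl fun k _ ↦ ?_
  rw [mul_div_right_comm, mul_div_right_comm, cast_choose_div_add_two]
  ring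

lemma sum_choose_mul_fib_div_add_one_mul_add_two (n : ℕ) :
    ∑ k ∈ range (n + 1), (n.choose k : ℚ) * (-1) ^ k * Nat.fib k / ((k + 1) * (k + 2)) =
      (n + 3 - Nat.fib (n + 4)) / ((n + 1) * (n + 2)) := by
  have h : ∑ k ∈ range (n + 1), (-1) ^ k * ((n + 2).choose (k + 2) : ℚ) * Nat.fib k =
      n + 3 - Nat.fib (n + 4) := by
    exact_mod_cast sum_choose_add_two_mul_fib n
  rw [← h, sum_div]
  refine sum_congr rfl fun k _ ↦ ?_
  rw [mul_div_right_comm, mul_div_right_comm, cast_choose_div_add_one_mul_add_two]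
  ring

theorem stmt_19 (n : ℕ) :
    (∑ k ∈ range (n + 1),
      (n.choose k : ℚ) * (-1) ^ (k + 1) * (fibZ ((n : ℤ) - 2 * k) : ℚ) / (k + 2) =
      ∑ k ∈ range (n + 1), (n.choose k : ℚ) * (-1) ^ k * Nat.fib k / ((k + 1) * (k + 2))) ∧
    (∑ k ∈ range (n + 1), (n.choose k : ℚ) * (-1) ^ k * Nat.fib k / ((k + 1) * (k + 2)) =
      (1 - Nat.fib (n + 4)) / ((n + 1) * (n + 2)) + 1 / (n + 1)) := by
  have hn1 : (n : ℚ) + 1 ≠ 0 := Nat.cast_add_one_ne_zero n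
  have hn2 : (n : ℚ) + 2 ≠ 0 := by exact_mod_cast Nat.succ_ne_zero (n + 1)
  rw [sum_choose_mul_fibZ_sub_two_mul_div_add_two, sum_choose_mul_fib_div_add_one_mul_add_two]
  constructor <;> field_simp <;> ring
end
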